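/- Let α₁, β₁ be real numbers. The double inequality α₁·C(a,b) + (1−α₁)·A(a,b) < T(a,b) < β₁·C(a,b) + (1−β₁)·A(a,b) holds for all positive real numbers a, b with a ≠ b if and only if α₁ ≤ 4/π − 1 and β₁ ≥ 1/3. -/

import Mathlib

open Real

/-- The Seiffert mean of two positive reals. -/
noncomputable def seiffertT (a b : ℝ) : ℝ := (a - b) / (2 * Real.arctan ((a - b) / (a + b)))

/-- The arithmetic mean of two positive reals. -/
noncomputable def arithMean (a b : ℝ) : ℝ := (a + b) / 2

/-- The contra-harmonic mean of two positive reals. -/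
noncomputable def contraharmonicMean (a b : ℝ) : ℝ := (a ^ 2 + b ^ 2) / (a + b)

/-!
Put `a = s (1 + y)`, `b = s (1 - y)` with `s = A(a,b)` and `0 < y < 1`. Then `T = s y / arctan y`
and `γ C + (1 - γ) A = s (1 + γ y²)`, so the double inequality says
`(1 + α y²) arctan y < y < (1 + β y²) arctan y` on `(0, 1)`.

For `β = 1/3` this is `3y / (3 + y²) < arctan y`, whose difference has derivative
`4y⁴ / ((1 + y²)(3 + y²)²)`. For `α = c = 4/π - 1` the function
`k t = t - (1 + c t²) arctan t` vanishes at `0` and `1`, and `k' t = t m t` where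
`m t = (1 - c) t / (1 + t²) - 2 c arctan t` increases and then decreases to `m 1 < 0`; so `m`
changes sign once, `k` increases and then decreases, and `k > 0` on `(0, 1)`.
Conversely, letting `y → 1` forces `α ≤ 4/π - 1`, and letting `y → 0` after bounding
`arctan y < y - y³/3 + y⁵/5` forces `β ≥ 1/3`.
-/

open Set

section Calculus

variable {f f' : ℝ → ℝ} {a b c : ℝ}

lemma strictMonoOn_Icc_of_hasDerivAt_pos (hf : ∀ t, HasDerivAt f (f' t) t)
    (hf' : ∀ t ∈ Ioo a b, 0 < f' t) : StrictMonoOn f (Icc a b) :=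
  strictMonoOn_of_hasDerivWithinAt_pos (convex_Icc a b)
    (fun t _ => (hf t).continuousAt.continuousWithinAt)
    (fun t _ => (hf t).hasDerivWithinAt) (by rwa [interior_Icc])

lemma strictAntiOn_Icc_of_hasDerivAt_neg (hf : ∀ t, HasDerivAt f (f' t) t)
    (hf' : ∀ t ∈ Ioo a b, f' t < 0) : StrictAntiOn f (Icc a b) :=
  strictAntiOn_of_hasDerivWithinAt_neg (convex_Icc a b)
    (fun t _ => (hf t).continuousAt.continuousWithinAt)
    (fun t _ => (hf t).hasDerivWithinAt) (by rwa [interior_Icc])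

lemma lt_of_hasDerivAt_pos (hf : ∀ t, HasDerivAt f (f' t) t) (hf' : ∀ t ∈ Ioo a b, 0 < f' t)
    (hab : a < b) : f a < f b :=
  strictMonoOn_Icc_of_hasDerivAt_pos hf hf' (left_mem_Icc.2 hab.le) (right_mem_Icc.2 hab.le) hab

lemma pos_of_strictMonoOn_of_strictAntiOn (hmono : StrictMonoOn f (Icc a c))
    (hanti : StrictAntiOn f (Icc c b)) (ha : 0 ≤ f a) (hb : 0 ≤ f b) {x : ℝ}
    (hx : x ∈ Ioo a b) : 0 < f x := by
  rcases le_or_gt x c with hxc | hcx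
  · exact ha.trans_lt (hmono ⟨le_rfl, hx.1.le.trans hxc⟩ ⟨hx.1.le, hxc⟩ hx.1)
  · exact hb.trans_lt (hanti ⟨hcx.le, hx.2.le⟩ ⟨hcx.le.trans hx.2.le, le_rfl⟩ hx.2)

lemma exists_pos_neg_of_strictMonoOn_of_strictAntiOn (hf : ContinuousOn f (Icc c b))
    (hmono : StrictMonoOn f (Icc a c)) (hanti : StrictAntiOn f (Icc c b)) (hac : a < c)
    (hcb : c ≤ b) (ha : f a = 0) (hb : f b < 0) :
    ∃ d ∈ Ioo c b, (∀ t ∈ Ioo a d, 0 < f t) ∧ ∀ t ∈ Ioc d b, f t < 0 := by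
  have hc : 0 < f c := ha ▸ hmono ⟨le_rfl, hac.le⟩ ⟨hac.le, le_rfl⟩ hac
  obtain ⟨d, hd, hfd⟩ := intermediate_value_Ioo' hcb hf ⟨hb, hc⟩
  refine ⟨d, hd, fun t ht => ?_, fun t ht => ?_⟩
  · exact pos_of_strictMonoOn_of_strictAntiOn hmono (hanti.mono (Icc_subset_Icc_right hd.2.le))
      ha.ge hfd.ge ht
  · exact hfd ▸ hanti ⟨hd.1.le, hd.2.le⟩ ⟨hd.1.le.trans ht.1.le, ht.2⟩ ht.1

end Calculus

lemma three_mul_div_three_add_sq_lt_arctan {x : ℝ} (hx : 0 < x) :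
    3 * x / (3 + x ^ 2) < arctan x := by
  have hderiv : ∀ t : ℝ, HasDerivAt (fun t => arctan t - 3 * t / (3 + t ^ 2))
      (4 * t ^ 4 / ((1 + t ^ 2) * (3 + t ^ 2) ^ 2)) t := by
    intro t
    refine ((hasDerivAt_arctan t).sub (((hasDerivAt_id t).const_mul 3).div
      ((hasDerivAt_pow 2 t).const_add 3) (by positivity))).congr_deriv ?_
    simp only [id]
    field_simp
    ring
  have := lt_of_hasDerivAt_pos hderiv (fun t ht => by have := ht.1; positivity) hx
  simpa using this

lemma arctan_lt_taylor {x : ℝ} (hx : 0 < x) : arctan x < x - x ^ 3 / 3 + x ^ 5 / 5 := by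
  have hderiv : ∀ t : ℝ, HasDerivAt (fun t => t - t ^ 3 / 3 + t ^ 5 / 5 - arctan t)
      (t ^ 6 / (1 + t ^ 2)) t := by
    intro t
    refine ((((hasDerivAt_id t).sub ((hasDerivAt_pow 3 t).div_const 3)).add
      ((hasDerivAt_pow 5 t).div_const 5)).sub (hasDerivAt_arctan t)).congr_deriv ?_
    field_simp
    ring
  have := lt_of_hasDerivAt_pos hderiv (fun t ht => by have := ht.1; positivity) hx
  simpa using this

lemma hasDerivAt_sub_one_add_mul_sq_mul_arctan (c t : ℝ) :
    HasDerivAt (fun t => t - (1 + c * t ^ 2) * arctan t)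
      (t * ((1 - c) * t / (1 + t ^ 2) - 2 * c * arctan t)) t := by
  refine ((hasDerivAt_id t).sub ((((hasDerivAt_pow 2 t).const_mul c).const_add 1).mul
    (hasDerivAt_arctan t))).congr_deriv ?_
  field_simp
  ring

lemma hasDerivAt_mul_div_one_add_sq_sub_mul_arctan (c t : ℝ) :
    HasDerivAt (fun t => (1 - c) * t / (1 + t ^ 2) - 2 * c * arctan t)
      (((1 - 3 * c) - (1 + c) * t ^ 2) / (1 + t ^ 2) ^ 2) t := by
  refine ((((hasDerivAt_id t).const_mul (1 - c)).div ((hasDerivAt_pow 2 t).const_add 1)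
    (by positivity)).sub ((hasDerivAt_arctan t).const_mul (2 * c))).congr_deriv ?_
  simp only [id]
  field_simp
  ring

lemma exists_sign_change_mul_div_one_add_sq_sub_mul_arctan {c : ℝ} (hc : 3 * c < 1)
    (h1 : 1 < c * (1 + π)) :
    ∃ d ∈ Ioo 0 1, (∀ t ∈ Ioo 0 d, 0 < (1 - c) * t / (1 + t ^ 2) - 2 * c * arctan t) ∧
      ∀ t ∈ Ioc d 1, (1 - c) * t / (1 + t ^ 2) - 2 * c * arctan t < 0 := by
  have hm := hasDerivAt_mul_div_one_add_sq_sub_mul_arctan c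
  have hc0 : 0 < c := pos_of_mul_pos_left (one_pos.trans h1) (by linarith [pi_pos])
  have hq : 0 < (1 - 3 * c) / (1 + c) := div_pos (by linarith) (by linarith)
  set x₀ := √((1 - 3 * c) / (1 + c))
  have hx₀ : x₀ ^ 2 = (1 - 3 * c) / (1 + c) := sq_sqrt hq.le
  have hx₀_pos : 0 < x₀ := sqrt_pos.2 hq
  have hx₀_lt : x₀ < 1 := (sqrt_lt' one_pos).2 (by rw [div_lt_iff₀ (by linarith)]; linarith)
  have hm' (t : ℝ) : (1 - 3 * c) - (1 + c) * t ^ 2 = (1 + c) * (x₀ ^ 2 - t ^ 2) := by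
    rw [hx₀]; field_simp
  have hmono := strictMonoOn_Icc_of_hasDerivAt_pos (a := 0) (b := x₀) hm fun t ht => by
    have : t ^ 2 < x₀ ^ 2 := by nlinarith [ht.1, ht.2]
    rw [hm']
    exact div_pos (mul_pos (by linarith) (by linarith)) (by positivity)
  have hanti := strictAntiOn_Icc_of_hasDerivAt_neg (a := x₀) (b := 1) hm fun t ht => by
    have : x₀ ^ 2 < t ^ 2 := by nlinarith [ht.1, ht.2]
    rw [hm']
    exact div_neg_of_neg_of_pos (mul_neg_of_pos_of_neg (by linarith) (by linarith))
      (by positivity)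
  obtain ⟨d, hd, hpos, hneg⟩ := exists_pos_neg_of_strictMonoOn_of_strictAntiOn
    (fun t _ => (hm t).continuousAt.continuousWithinAt) hmono hanti hx₀_pos hx₀_lt.le
    (by simp) (by simp only [arctan_one]; nlinarith)
  exact ⟨d, ⟨hx₀_pos.trans hd.1, hd.2⟩, hpos, hneg⟩

lemma one_add_mul_sq_mul_arctan_lt_self {c : ℝ} (hc : 3 * c < 1) (h1 : 1 < c * (1 + π))
    (h4 : (1 + c) * π ≤ 4) {x : ℝ} (hx : x ∈ Ioo 0 1) : (1 + c * x ^ 2) * arctan x < x := by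
  obtain ⟨d, hd, hpos, hneg⟩ := exists_sign_change_mul_div_one_add_sq_sub_mul_arctan hc h1
  have hk := hasDerivAt_sub_one_add_mul_sq_mul_arctan c
  have hmono := strictMonoOn_Icc_of_hasDerivAt_pos (a := 0) (b := d) hk
    fun t ht => mul_pos ht.1 (hpos t ht)
  have hanti := strictAntiOn_Icc_of_hasDerivAt_neg (a := d) (b := 1) hk
    fun t ht => mul_neg_of_pos_of_neg (hd.1.trans ht.1) (hneg t ⟨ht.1, ht.2.le⟩)
  have := pos_of_strictMonoOn_of_strictAntiOn hmono hanti (by simp)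
    (by simp only [arctan_one]; linarith) hx
  simpa [sub_pos] using this

lemma one_add_four_div_pi_sub_one_mul_sq_mul_arctan_lt_self {x : ℝ} (hx : x ∈ Ioo 0 1) :
    (1 + (4 / π - 1) * x ^ 2) * arctan x < x := by
  have hπ : 4 / 3.15 < 4 / π ∧ 4 / π < 4 / 3 :=
    ⟨div_lt_div_of_pos_left four_pos pi_pos pi_lt_d2,
      div_lt_div_of_pos_left four_pos three_pos pi_gt_three⟩
  have h1 : 1 < (4 / π - 1) * (1 + π) := by
    rw [show (4 / π - 1) * (1 + π) = 4 / π + 3 - π by field_simp; ring]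
    linarith [pi_lt_d2]
  exact one_add_mul_sq_mul_arctan_lt_self (by linarith) h1
    (by rw [add_sub_cancel, div_mul_cancel₀ 4 pi_ne_zero]) hx

def SeiffertBounds (α β a b : ℝ) : Prop :=
  α * contraharmonicMean a b + (1 - α) * arithMean a b < seiffertT a b ∧
    seiffertT a b < β * contraharmonicMean a b + (1 - β) * arithMean a b

def ArctanBounds (α β y : ℝ) : Prop :=
  (1 + α * y ^ 2) * arctan y < y ∧ y < (1 + β * y ^ 2) * arctan y

section Means

variable {α β : ℝ}

lemma seiffertT_comm (a b : ℝ) : seiffertT a b = seiffertT b a := by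
  rw [seiffertT, seiffertT, add_comm b, ← neg_sub a, neg_div (a + b), arctan_neg]
  ring

lemma arithMean_comm (a b : ℝ) : arithMean a b = arithMean b a := by
  rw [arithMean, arithMean, add_comm]

lemma contraharmonicMean_comm (a b : ℝ) : contraharmonicMean a b = contraharmonicMean b a := by
  rw [contraharmonicMean, contraharmonicMean, add_comm b, add_comm (b ^ 2)]

lemma seiffertBounds_comm (a b : ℝ) : SeiffertBounds α β a b ↔ SeiffertBounds α β b a := by
  rw [SeiffertBounds, SeiffertBounds, seiffertT_comm, arithMean_comm, contraharmonicMean_comm]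

variable {s y : ℝ}

lemma seiffertT_mul_one_add_mul_one_sub (hs : s ≠ 0) :
    seiffertT (s * (1 + y)) (s * (1 - y)) = s * (y / arctan y) := by
  rw [seiffertT, show (s * (1 + y) - s * (1 - y)) / (s * (1 + y) + s * (1 - y)) = y by
    field_simp; ring]
  ring

lemma arithMean_mul_one_add_mul_one_sub : arithMean (s * (1 + y)) (s * (1 - y)) = s := by
  rw [arithMean]; ring

lemma contraharmonicMean_mul_one_add_mul_one_sub (hs : s ≠ 0) :
    contraharmonicMean (s * (1 + y)) (s * (1 - y)) = s * (1 + y ^ 2) := by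
  rw [contraharmonicMean]; field_simp; ring

lemma seiffertBounds_iff_arctanBounds (hs : 0 < s) (hy : 0 < y) :
    SeiffertBounds α β (s * (1 + y)) (s * (1 - y)) ↔ ArctanBounds α β y := by
  have harctan : 0 < arctan y := arctan_pos.2 hy
  have hmean (γ : ℝ) : γ * (s * (1 + y ^ 2)) + (1 - γ) * s = s * (1 + γ * y ^ 2) := by ring
  rw [SeiffertBounds, ArctanBounds, seiffertT_mul_one_add_mul_one_sub hs.ne',
    arithMean_mul_one_add_mul_one_sub, contraharmonicMean_mul_one_add_mul_one_sub hs.ne',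
    hmean, hmean, mul_lt_mul_iff_of_pos_left hs, mul_lt_mul_iff_of_pos_left hs,
    lt_div_iff₀ harctan, div_lt_iff₀ harctan]

lemma forall_seiffertBounds_iff :
    (∀ a b : ℝ, 0 < a → 0 < b → a ≠ b → SeiffertBounds α β a b) ↔
      ∀ y ∈ Ioo 0 1, ArctanBounds α β y := by
  constructor
  · rintro h y ⟨hy0, hy1⟩
    rw [← seiffertBounds_iff_arctanBounds one_pos hy0, one_mul, one_mul]
    exact h _ _ (by linarith) (by linarith) (by linarith)
  · suffices ∀ a b : ℝ, 0 < b → b < a → (∀ y ∈ Ioo 0 1, ArctanBounds α β y) →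
        SeiffertBounds α β a b by
      intro h a b ha hb hab
      rcases hab.lt_or_gt with hab | hab
      · exact (seiffertBounds_comm a b).2 (this b a ha hab h)
      · exact this a b hb hab h
    intro a b hb hab h
    obtain ⟨s, y, hs, hy, rfl, rfl⟩ :
        ∃ s y, 0 < s ∧ y ∈ Ioo 0 1 ∧ a = s * (1 + y) ∧ b = s * (1 - y) := by
      have hsum : 0 < a + b := by linarith
      refine ⟨(a + b) / 2, (a - b) / (a + b), by positivity,
        ⟨div_pos (by linarith) hsum, (div_lt_one hsum).2 (by linarith)⟩, ?_, ?_⟩ <;>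
      · field_simp; ring
    exact (seiffertBounds_iff_arctanBounds hs hy.1).2 (h y hy)

end Means

section Arctan

variable {α β : ℝ}

lemma arctanBounds_of_le (hα : α ≤ 4 / π - 1) (hβ : 1 / 3 ≤ β) {y : ℝ}
    (hy : y ∈ Ioo 0 1) : ArctanBounds α β y := by
  have harctan : 0 < arctan y := arctan_pos.2 hy.1
  have hupper := three_mul_div_three_add_sq_lt_arctan hy.1
  rw [div_lt_iff₀ (by positivity)] at hupper
  constructor
  · calc (1 + α * y ^ 2) * arctan y ≤ (1 + (4 / π - 1) * y ^ 2) * arctan y := by gcongr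
      _ < y := one_add_four_div_pi_sub_one_mul_sq_mul_arctan_lt_self hy
  · calc y < (1 + 1 / 3 * y ^ 2) * arctan y := by linarith
      _ ≤ (1 + β * y ^ 2) * arctan y := by gcongr

lemma le_four_div_pi_sub_one (h : ∀ y ∈ Ioo 0 1, (1 + α * y ^ 2) * arctan y < y) :
    α ≤ 4 / π - 1 := by
  have h1 : (1 + α * 1 ^ 2) * arctan 1 ≤ 1 :=
    ContinuousWithinAt.closure_le (by simp [closure_Ioo]) (by fun_prop) continuousWithinAt_id
      fun y hy => (h y hy).le
  rw [arctan_one] at h1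
  rw [le_sub_iff_add_le, le_div_iff₀ pi_pos]
  linarith

lemma one_div_three_le (h : ∀ y ∈ Ioo 0 1, y < (1 + β * y ^ 2) * arctan y) : 1 / 3 ≤ β := by
  have hpoly : ∀ y ∈ Ioo (0 : ℝ) 1,
      0 ≤ (β - 1 / 3) + (1 / 5 - β / 3) * y ^ 2 + β / 5 * y ^ 4 := by
    rintro y ⟨hy0, hy1⟩
    have hy := h y ⟨hy0, hy1⟩
    have harctan : 0 < arctan y := arctan_pos.2 hy0
    have hfactor : 0 < 1 + β * y ^ 2 := pos_of_mul_pos_left (hy0.trans hy) harctan.le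
    have := hy.trans (mul_lt_mul_of_pos_left (arctan_lt_taylor hy0) hfactor)
    nlinarith [pow_pos hy0 3]
  have := ContinuousWithinAt.closure_le (x := 0) (by simp [closure_Ioo]) continuousWithinAt_const
    (by fun_prop) hpoly
  simpa [sub_nonneg] using this

lemma forall_arctanBounds_iff :
    (∀ y ∈ Ioo 0 1, ArctanBounds α β y) ↔ α ≤ 4 / π - 1 ∧ 1 / 3 ≤ β :=
  ⟨fun h => ⟨le_four_div_pi_sub_one fun y hy => (h y hy).1,
      one_div_three_le fun y hy => (h y hy).2⟩,
    fun h _ hy => arctanBounds_of_le h.1 h.2 hy⟩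

end Arctan

theorem stmt_9 (α₁ β₁ : ℝ) :
    (∀ a b : ℝ, 0 < a → 0 < b → a ≠ b →
        α₁ * contraharmonicMean a b + (1 - α₁) * arithMean a b < seiffertT a b ∧
        seiffertT a b < β₁ * contraharmonicMean a b + (1 - β₁) * arithMean a b) ↔
      (α₁ ≤ 4 / π - 1 ∧ 1 / 3 ≤ β₁) :=
  forall_seiffertBounds_iff.trans forall_arctanBounds_iff
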